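/- arXiv:1512.02549 — 3 statements merged into one kernel-verified Lean document; each statement's English description precedes it below -/
import Mathlib

section
/- Let F1 and F2 be faces of a closed convex cone K with F1 ⊊ F2 (strict inclusion of nonempty faces). Then dim(span F1) < dim(span F2). -/
/-- A closed convex cone as a set. -/
def IsClosedConvexCone {m : ℕ} (K : Set (EuclideanSpace ℝ (Fin m))) : Prop :=
  IsClosed K ∧ Convex ℝ K ∧ ∀ x ∈ K, ∀ t : ℝ, 0 ≤ t → t • x ∈ K

/-- A face of a convex cone: a convex subcone `F` such that whenever `x, y ∈ K` and
`x + y ∈ F`, then `x, y ∈ F`. -/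
def IsFace {m : ℕ} (K F : Set (EuclideanSpace ℝ (Fin m))) : Prop :=
  F ⊆ K ∧ Convex ℝ F ∧ (∀ x ∈ F, ∀ t : ℝ, 0 ≤ t → t • x ∈ F) ∧
    ∀ x ∈ K, ∀ y ∈ K, x + y ∈ F → x ∈ F ∧ y ∈ F

/-!
A nonempty convex cone `F` spans exactly the differences `p - q` of its elements. If `F` is a
face of `K` and `x = p - q ∈ K` with `p, q ∈ F`, then `x + q = p ∈ F` forces `x ∈ F`; hence
`K ∩ span F = F`. A point of `F₂ \ F₁` therefore lies in `span F₂` but not in `span F₁`.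
-/

section ConvexCone

variable {𝕜 E : Type*} [Field 𝕜] [LinearOrder 𝕜] [IsStrictOrderedRing 𝕜]
  [AddCommGroup E] [Module 𝕜 E] {s : Set E}

theorem Convex.add_mem_of_smul_mem (hs : Convex 𝕜 s)
    (hsmul : ∀ x ∈ s, ∀ t : 𝕜, 0 ≤ t → t • x ∈ s) {x y : E} (hx : x ∈ s) (hy : y ∈ s) :
    x + y ∈ s := by
  have hmid : (2⁻¹ : 𝕜) • x + (2⁻¹ : 𝕜) • y ∈ s :=
    hs hx hy (by norm_num) (by norm_num) (by norm_num)
  have hdouble : (2 : 𝕜) • ((2⁻¹ : 𝕜) • x + (2⁻¹ : 𝕜) • y) = x + y := by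
    rw [smul_add, smul_smul, smul_smul]; norm_num
  simpa only [hdouble] using hsmul _ hmid 2 zero_le_two

theorem Convex.exists_sub_eq_of_mem_span (hs : Convex 𝕜 s)
    (hsmul : ∀ x ∈ s, ∀ t : 𝕜, 0 ≤ t → t • x ∈ s) (hne : s.Nonempty) {x : E}
    (hx : x ∈ Submodule.span 𝕜 s) : ∃ p ∈ s, ∃ q ∈ s, x = p - q := by
  have h0 : (0 : E) ∈ s := by
    obtain ⟨y, hy⟩ := hne
    simpa using hsmul y hy 0 le_rfl
  induction hx using Submodule.span_induction with
  | mem y hy => exact ⟨y, hy, 0, h0, (sub_zero y).symm⟩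
  | zero => exact ⟨0, h0, 0, h0, (sub_zero 0).symm⟩
  | add y z _ _ ihy ihz =>
    obtain ⟨p, hp, q, hq, rfl⟩ := ihy
    obtain ⟨p', hp', q', hq', rfl⟩ := ihz
    exact ⟨p + p', hs.add_mem_of_smul_mem hsmul hp hp',
      q + q', hs.add_mem_of_smul_mem hsmul hq hq', by abel⟩
  | smul a y _ ih =>
    obtain ⟨p, hp, q, hq, rfl⟩ := ih
    rcases le_or_gt 0 a with ha | ha
    · exact ⟨a • p, hsmul p hp a ha, a • q, hsmul q hq a ha, smul_sub a p q⟩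
    · refine ⟨(-a) • q, hsmul q hq _ (by linarith), (-a) • p, hsmul p hp _ (by linarith), ?_⟩
      module

end ConvexCone

theorem IsFace.mem_of_mem_span {m : ℕ} {K F : Set (EuclideanSpace ℝ (Fin m))}
    (hF : IsFace K F) (hne : F.Nonempty) {x : EuclideanSpace ℝ (Fin m)} (hxK : x ∈ K)
    (hx : x ∈ Submodule.span ℝ F) : x ∈ F := by
  obtain ⟨hFK, hconv, hsmul, hface⟩ := hF
  obtain ⟨p, hp, q, hq, rfl⟩ := hconv.exists_sub_eq_of_mem_span hsmul hne hx
  exact (hface _ hxK q (hFK hq) (by rwa [sub_add_cancel])).1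

theorem IsFace.span_lt_span {m : ℕ} {K F₁ F₂ : Set (EuclideanSpace ℝ (Fin m))}
    (hF₁ : IsFace K F₁) (hne : F₁.Nonempty) (hF₂K : F₂ ⊆ K) (hss : F₁ ⊂ F₂) :
    Submodule.span ℝ F₁ < Submodule.span ℝ F₂ := by
  obtain ⟨x, hxF₂, hxF₁⟩ := Set.exists_of_ssubset hss
  refine lt_of_le_of_ne (Submodule.span_mono hss.subset) fun heq => hxF₁ ?_
  exact hF₁.mem_of_mem_span hne (hF₂K hxF₂) (heq ▸ Submodule.subset_span hxF₂)

theorem stmt4_general {n : ℕ} (K F1 F2 : Set (EuclideanSpace ℝ (Fin n)))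
    (h1 : IsFace K F1) (h2 : IsFace K F2)
    (h1ne : F1.Nonempty) (hss : F1 ⊂ F2) :
    Module.finrank ℝ (Submodule.span ℝ F1) < Module.finrank ℝ (Submodule.span ℝ F2) :=
  Submodule.finrank_lt_finrank_of_lt (h1.span_lt_span h1ne h2.1 hss)

/-- Strict inclusion of nonempty faces strictly increases the dimension of the span. -/
theorem stmt4 {n : ℕ} (K F1 F2 : Set (EuclideanSpace ℝ (Fin n)))
    (hK : IsClosedConvexCone K) (h1 : IsFace K F1) (h2 : IsFace K F2)
    (h1ne : F1.Nonempty) (h2ne : F2.Nonempty) (hss : F1 ⊂ F2) :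
    Module.finrank ℝ (Submodule.span ℝ F1) < Module.finrank ℝ (Submodule.span ℝ F2) :=
  stmt4_general K F1 F2 h1 h2 h1ne hss
end

section
/- Let K^1 and K^2 be closed convex cones, and let F^1 ⊆ K^1, F^2 ⊆ K^2 be faces whose relative interiors intersect: ri(F^1) ∩ ri(F^2) ≠ ∅. Then the dual cone of F^1 ∩ F^2 equals (F^1)* + (F^2)*, i.e., the sum of dual cones is closed and no closure operation is needed. -/
/-!
Let `x₀ ∈ ri F¹ ∩ ri F²` and let `Vᵢ` be the span of `Fᵢ`. Since a ball of `Vᵢ` around `x₀` lies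
in `Fᵢ`, every `u ∈ (Fᵢ)*` satisfies `ε ‖P_{Vᵢ} u‖ ≤ ⟪x₀, u⟫`. Hence along a convergent sequence
`uₖ + vₖ` in `(F¹)* + (F²)*` the components in `V₁` and `V₂` stay bounded, while the remainder
lies in the closed subspace `V₁ᗮ + V₂ᗮ`, which can be added to the dual cones freely; so
`(F¹)* + (F²)*` is closed. As faces of closed cones, `F¹` and `F²` are closed, so by the bipolar
theorem the dual of `(F¹)* + (F²)*` is `F¹ ∩ F²`, and dualising once more gives the claim.
-/

open Pointwise

open scoped RealInnerProductSpace

theorem exists_pos_add_mem_of_mem_intrinsicInterior {E : Type*} [NormedAddCommGroup E]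
    [NormedSpace ℝ E] {s : Set E} {x : E} (hx : x ∈ intrinsicInterior ℝ s) :
    ∃ ε > 0, ∀ d ∈ vectorSpan ℝ s, ‖d‖ ≤ ε → x + d ∈ s := by
  obtain ⟨y, hy, rfl⟩ := mem_intrinsicInterior.mp hx
  obtain ⟨ε, hε, hball⟩ := Metric.mem_nhds_iff.mp (mem_interior_iff_mem_nhds.mp hy)
  refine ⟨ε / 2, half_pos hε, fun d hd hdε => ?_⟩
  rw [← direction_affineSpan] at hd
  have hyd : d +ᵥ (y : E) ∈ affineSpan ℝ s := AffineSubspace.vadd_mem_of_mem_direction hd y.2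
  have : (⟨d +ᵥ (y : E), hyd⟩ : affineSpan ℝ s) ∈ Metric.ball y ε := by
    rw [Metric.mem_ball, Subtype.dist_eq]
    simp only [vadd_eq_add, dist_add_self_left]
    linarith
  simpa [add_comm] using hball this

theorem subset_vectorSpan_of_zero_mem {E : Type*} [AddCommGroup E] [Module ℝ E] {s : Set E}
    (h0 : (0 : E) ∈ s) : s ⊆ vectorSpan ℝ s :=
  fun y hy => by simpa using vsub_mem_vectorSpan ℝ hy h0

namespace ProperCone

variable {E : Type*} [NormedAddCommGroup E] [InnerProductSpace ℝ E] [CompleteSpace E]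

theorem add_mem_innerDual_of_mem_orthogonal {s : Set E} {V : Submodule ℝ E} (hsV : s ⊆ V)
    {u p : E} (hu : u ∈ innerDual s) (hp : p ∈ Vᗮ) : u + p ∈ innerDual s :=
  mem_innerDual.mpr fun x hx => by
    rw [inner_add_right, Submodule.inner_right_of_mem_orthogonal (hsV hx) hp, add_zero]
    exact mem_innerDual.mp hu hx

theorem starProjection_mem_innerDual {s : Set E} {V : Submodule ℝ E} [V.HasOrthogonalProjection]
    (hsV : s ⊆ V) {u : E} (hu : u ∈ innerDual s) : V.starProjection u ∈ innerDual s := by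
  simpa using add_mem_innerDual_of_mem_orthogonal hsV hu
    (neg_mem (V.sub_starProjection_mem_orthogonal u))

theorem mul_norm_starProjection_le_inner {s : Set E} [(vectorSpan ℝ s).HasOrthogonalProjection]
    {x : E} {ε : ℝ} (hε : 0 ≤ ε) (hx : ∀ d ∈ vectorSpan ℝ s, ‖d‖ ≤ ε → x + d ∈ s) {u : E}
    (hu : u ∈ innerDual s) : ε * ‖(vectorSpan ℝ s).starProjection u‖ ≤ ⟪x, u⟫ := by
  set p := (vectorSpan ℝ s).starProjection u
  rcases eq_or_ne p 0 with hp | hp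
  · simpa [hp] using mem_innerDual.mp hu (by simpa using hx 0 (zero_mem _) (by simpa using hε))
  have hp_pos : 0 < ‖p‖ := norm_pos_iff.mpr hp
  have hpu : ⟪p, u⟫ = ‖p‖ ^ 2 := by
    simpa using (vectorSpan ℝ s).re_inner_starProjection_eq_normSq u
  have hd_mem : -(ε / ‖p‖) • p ∈ vectorSpan ℝ s :=
    Submodule.smul_mem _ _ (Submodule.starProjection_apply_mem _ _)
  have hd_norm : ‖-(ε / ‖p‖) • p‖ ≤ ε := by
    rw [norm_smul, norm_neg, Real.norm_of_nonneg (by positivity), div_mul_cancel₀ _ hp_pos.ne']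
  have hd := mem_innerDual.mp hu (hx _ hd_mem hd_norm)
  rw [inner_add_left, inner_smul_left, hpu, conj_trivial] at hd
  calc ε * ‖p‖ = ε / ‖p‖ * ‖p‖ ^ 2 := by field_simp
    _ ≤ ⟪x, u⟫ := by linarith

theorem mem_innerDual_add_innerDual_of_sub_mem_sup {s t : Set E} {V W : Submodule ℝ E}
    (hsV : s ⊆ V) (htW : t ⊆ W) {a b z : E} (ha : a ∈ innerDual s) (hb : b ∈ innerDual t)
    (hz : z - a - b ∈ Vᗮ ⊔ Wᗮ) : z ∈ (innerDual s : Set E) + (innerDual t : Set E) := by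
  obtain ⟨p, hp, q, hq, hpq⟩ := Submodule.mem_sup.mp hz
  refine ⟨a + p, add_mem_innerDual_of_mem_orthogonal hsV ha hp,
    b + q, add_mem_innerDual_of_mem_orthogonal htW hb hq, ?_⟩
  show a + p + (b + q) = z
  rw [add_add_add_comm, hpq]; abel

theorem isClosed_innerDual_add_innerDual [FiniteDimensional ℝ E] {s t : Set E}
    (h0s : (0 : E) ∈ s) (h0t : (0 : E) ∈ t) {x : E} (hxs : x ∈ intrinsicInterior ℝ s)
    (hxt : x ∈ intrinsicInterior ℝ t) :
    IsClosed ((innerDual s : Set E) + (innerDual t : Set E)) := by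
  set V := vectorSpan ℝ s
  set W := vectorSpan ℝ t
  obtain ⟨ε, hε, hεs⟩ := exists_pos_add_mem_of_mem_intrinsicInterior hxs
  obtain ⟨δ, hδ, hδt⟩ := exists_pos_add_mem_of_mem_intrinsicInterior hxt
  refine isClosed_of_closure_subset fun z hz => ?_
  obtain ⟨w, hwS, hwz⟩ := mem_closure_iff_seq_limit.mp hz
  choose u hu v hv huv using fun k => Set.mem_add.mp (hwS k)
  obtain ⟨M, hM⟩ : ∃ M, ∀ k, ‖w k‖ ≤ M :=
    let ⟨M, hM⟩ := hwz.norm.bddAbove_range; ⟨M, fun k => hM (Set.mem_range_self k)⟩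
  have hx_inner : ∀ k, ⟪x, u k⟫ + ⟪x, v k⟫ ≤ ‖x‖ * M := fun k => by
    rw [← inner_add_right, huv]
    exact (real_inner_le_norm _ _).trans (mul_le_mul_of_nonneg_left (hM k) (norm_nonneg x))
  have hxu : ∀ k, 0 ≤ ⟪x, u k⟫ := fun k => mem_innerDual.mp (hu k) (intrinsicInterior_subset hxs)
  have hxv : ∀ k, 0 ≤ ⟪x, v k⟫ := fun k => mem_innerDual.mp (hv k) (intrinsicInterior_subset hxt)
  have hbdd : ∀ k, (V.starProjection (u k), W.starProjection (v k)) ∈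
      Metric.closedBall (0 : E) (‖x‖ * M / ε) ×ˢ Metric.closedBall (0 : E) (‖x‖ * M / δ) := by
    intro k
    simp only [Set.mem_prod, mem_closedBall_zero_iff, le_div_iff₀ hε, le_div_iff₀ hδ]
    have := mul_norm_starProjection_le_inner hε.le hεs (hu k)
    have := mul_norm_starProjection_le_inner hδ.le hδt (hv k)
    constructor <;> nlinarith [hx_inner k, hxu k, hxv k]
  obtain ⟨⟨a, b⟩, -, φ, hφ, hab⟩ :=
    tendsto_subseq_of_bounded (Metric.isBounded_closedBall.prod Metric.isBounded_closedBall) hbdd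
  have ha : a ∈ innerDual s := (innerDual s).isClosed.mem_of_tendsto hab.fst_nhds
    (.of_forall fun k => starProjection_mem_innerDual (subset_vectorSpan_of_zero_mem h0s) (hu _))
  have hb : b ∈ innerDual t := (innerDual t).isClosed.mem_of_tendsto hab.snd_nhds
    (.of_forall fun k => starProjection_mem_innerDual (subset_vectorSpan_of_zero_mem h0t) (hv _))
  have hrest : z - a - b ∈ Vᗮ ⊔ Wᗮ := by
    refine (Vᗮ ⊔ Wᗮ).closed_of_finiteDimensional.mem_of_tendsto
      (((hwz.comp hφ.tendsto_atTop).sub hab.fst_nhds).sub hab.snd_nhds) (.of_forall fun k => ?_)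
    have : w (φ k) - V.starProjection (u (φ k)) - W.starProjection (v (φ k)) =
        (u (φ k) - V.starProjection (u (φ k))) + (v (φ k) - W.starProjection (v (φ k))) := by
      rw [← huv]; abel
    simpa [this] using Submodule.add_mem_sup (V.sub_starProjection_mem_orthogonal _)
      (W.sub_starProjection_mem_orthogonal _)
  exact mem_innerDual_add_innerDual_of_sub_mem_sup (subset_vectorSpan_of_zero_mem h0s)
    (subset_vectorSpan_of_zero_mem h0t) ha hb hrest

theorem innerDual_inter_eq_innerDual_add_innerDual (C D : ProperCone ℝ E)
    (hCD : IsClosed ((innerDual (C : Set E) : Set E) + (innerDual (D : Set E) : Set E))) :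
    (innerDual ((C : Set E) ∩ D) : Set E) =
      (innerDual (C : Set E) : Set E) + (innerDual (D : Set E) : Set E) := by
  let S : ProperCone ℝ E :=
    ⟨(innerDual (C : Set E)).toSubmodule ⊔ (innerDual (D : Set E)).toSubmodule,
      by convert hCD using 1; exact Submodule.coe_sup _ _⟩
  have hS : (innerDual (S : Set E) : Set E) = (C : Set E) ∩ D := by
    ext y
    refine ⟨fun hy => ⟨?_, ?_⟩, fun ⟨hyC, hyD⟩ => mem_innerDual.mpr fun x hx => ?_⟩
    · rw [← innerDual_innerDual C]
      exact fun x hx => hy (Submodule.mem_sup_left hx)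
    · rw [← innerDual_innerDual D]
      exact fun x hx => hy (Submodule.mem_sup_right hx)
    · obtain ⟨a, ha, b, hb, rfl⟩ := Submodule.mem_sup.mp hx
      rw [inner_add_left, real_inner_comm y a, real_inner_comm y b]
      exact add_nonneg (mem_innerDual.mp ha hyC) (mem_innerDual.mp hb hyD)
  rw [← hS, innerDual_innerDual]
  exact Submodule.coe_sup _ _

end ProperCone

def Convex.toProperCone {E : Type*} [NormedAddCommGroup E] [NormedSpace ℝ E] {s : Set E}
    (hs : Convex ℝ s) (hsmul : ∀ x ∈ s, ∀ t : ℝ, 0 ≤ t → t • x ∈ s) (h0 : (0 : E) ∈ s)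
    (hcl : IsClosed s) : ProperCone ℝ E where
  carrier := s
  add_mem' {x y} hx hy := by
    simpa [smul_add, smul_smul] using
      hsmul _ (hs hx hy (by norm_num : (0 : ℝ) ≤ 1 / 2) (by norm_num : (0 : ℝ) ≤ 1 / 2)
        (by norm_num)) 2 (by norm_num)
  zero_mem' := h0
  smul_mem' c x hx := hsmul x hx c c.2
  isClosed' := hcl

namespace IsFace

variable {n : ℕ} {K F : Set (EuclideanSpace ℝ (Fin n))}

theorem zero_mem (hF : IsFace K F) (hne : F.Nonempty) : 0 ∈ F := by
  obtain ⟨x, hx⟩ := hne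
  simpa using hF.2.2.1 x hx 0 le_rfl

theorem isClosed (hK : IsClosedConvexCone K) (hF : IsFace K F) {x₀ : EuclideanSpace ℝ (Fin n)}
    (hx₀ : x₀ ∈ intrinsicInterior ℝ F) : IsClosed F := by
  have hx₀F : x₀ ∈ F := intrinsicInterior_subset hx₀
  have hsub : F ⊆ vectorSpan ℝ F := subset_vectorSpan_of_zero_mem (hF.zero_mem ⟨x₀, hx₀F⟩)
  obtain ⟨hFK, -, hFsmul, hface⟩ := hF
  obtain ⟨ε, hε, hball⟩ := exists_pos_add_mem_of_mem_intrinsicInterior hx₀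
  refine isClosed_of_closure_subset fun x hx => ?_
  have hxK : x ∈ K := closure_minimal hFK hK.1 hx
  have hxV : x ∈ vectorSpan ℝ F :=
    closure_minimal hsub (vectorSpan ℝ F).closed_of_finiteDimensional hx
  set r := ε / (‖x - x₀‖ + 1)
  have hr : 0 < r := by positivity
  -- `y` lies on the far side of `x₀` from `x`, so `x₀` is a positive combination of `x` and `y`
  set y := x₀ + (-r) • (x - x₀)
  have hyF : y ∈ F := by
    refine hball _ (Submodule.smul_mem _ _ (sub_mem hxV (hsub hx₀F))) ?_
    rw [norm_smul, norm_neg, Real.norm_of_nonneg hr.le, div_mul_eq_mul_div,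
      div_le_iff₀ (by positivity)]
    nlinarith [norm_nonneg (x - x₀)]
  have hsum : r • x + y ∈ F := by
    have : r • x + y = (1 + r) • x₀ := by simp only [y]; module
    simpa [this] using hFsmul x₀ hx₀F (1 + r) (by positivity)
  have hrx : r • x ∈ F := (hface _ (hK.2.2 x hxK r hr.le) y (hFK hyF) hsum).1
  simpa [smul_smul, inv_mul_cancel₀ hr.ne'] using hFsmul _ hrx r⁻¹ (by positivity)

end IsFace

/-- If the relative interiors of the faces `F¹ ⊆ K¹`, `F² ⊆ K²` intersect, then
`(F¹ ∩ F²)* = (F¹)* + (F²)*` (the sum of dual cones is closed). -/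
theorem stmt6 {n : ℕ} (K1 K2 F1 F2 : Set (EuclideanSpace ℝ (Fin n)))
    (hK1 : IsClosedConvexCone K1) (hK2 : IsClosedConvexCone K2)
    (hF1 : IsFace K1 F1) (hF2 : IsFace K2 F2)
    (hri : (intrinsicInterior ℝ F1 ∩ intrinsicInterior ℝ F2).Nonempty) :
    (ProperCone.innerDual (F1 ∩ F2) : Set (EuclideanSpace ℝ (Fin n))) =
      (ProperCone.innerDual F1 : Set (EuclideanSpace ℝ (Fin n))) +
        (ProperCone.innerDual F2 : Set (EuclideanSpace ℝ (Fin n))) := by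
  obtain ⟨x, hx1, hx2⟩ := hri
  have h01 : 0 ∈ F1 := hF1.zero_mem ⟨x, intrinsicInterior_subset hx1⟩
  have h02 : 0 ∈ F2 := hF2.zero_mem ⟨x, intrinsicInterior_subset hx2⟩
  exact ProperCone.innerDual_inter_eq_innerDual_add_innerDual
    (hF1.2.1.toProperCone hF1.2.2.1 h01 (hF1.isClosed hK1 hx1))
    (hF2.2.1.toProperCone hF2.2.2.1 h02 (hF2.isClosed hK2 hx2))
    (ProperCone.isClosed_innerDual_add_innerDual h01 h02 hx1 hx2)
end

section
/- Let K ⊆ R^n be a closed convex cone, A : R^n → R^m linear, c ∈ R^n. Suppose d_1 ∈ K* ∩ ker A ∩ {c}^⊥ with d_1 ∉ K^⊥, and d_1* ∈ ri(K* ∩ ker A ∩ {c}^⊥). Then K ∩ {d_1*}^⊥ ⊆ K ∩ {d_1}^⊥, and moreover d_1* ∉ K^⊥. If additionally d_1 ∈ ri(K* ∩ ker A ∩ {c}^⊥), then K ∩ {d_1*}^⊥ = K ∩ {d_1}^⊥. -/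
open scoped RealInnerProductSpace

section IntrinsicInterior

variable {E : Type*} [AddCommGroup E] [Module ℝ E] [TopologicalSpace E]
  [IsTopologicalAddGroup E] [ContinuousSMul ℝ E] {C : Set E} {u v : E}

lemma exists_pos_add_smul_sub_mem_of_mem_intrinsicInterior
    (hu : u ∈ intrinsicInterior ℝ C) (hv : v ∈ C) :
    ∃ t : ℝ, 0 < t ∧ u + t • (u - v) ∈ C := by
  obtain ⟨y, hy, rfl⟩ := mem_intrinsicInterior.mp hu
  have hline (t : ℝ) : (y : E) + t • ((y : E) - v) ∈ affineSpan ℝ C := by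
    simpa [vsub_eq_sub, vadd_eq_add, add_comm] using
      (affineSpan ℝ C).smul_vsub_vadd_mem t y.2 (subset_affineSpan ℝ C hv) y.2
  let γ : ℝ → affineSpan ℝ C := fun t ↦ ⟨y + t • (y - v), hline t⟩
  have hγ : Continuous γ := by fun_prop
  have hγ0 : γ 0 = y := by ext; simp [γ]
  have hnear : ∀ᶠ t in nhdsWithin 0 (Set.Ioi 0), γ t ∈ interior ((↑) ⁻¹' C) :=
    nhdsWithin_le_nhds <| hγ.continuousAt.preimage_mem_nhds (hγ0 ▸ isOpen_interior.mem_nhds hy)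
  obtain ⟨t, ht, htpos⟩ := (hnear.and self_mem_nhdsWithin).exists
  exact ⟨t, htpos, interior_subset (s := ((↑) : affineSpan ℝ C → E) ⁻¹' C) ht⟩

lemma LinearMap.eq_zero_of_nonneg_of_mem_intrinsicInterior (f : E →ₗ[ℝ] ℝ)
    (hf : ∀ w ∈ C, 0 ≤ f w) (hu : u ∈ intrinsicInterior ℝ C) (hfu : f u = 0) (hv : v ∈ C) :
    f v = 0 := by
  obtain ⟨t, ht, hmem⟩ := exists_pos_add_smul_sub_mem_of_mem_intrinsicInterior hu hv
  have hbeyond : 0 ≤ -(t * f v) := by simpa [hfu] using hf _ hmem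
  have hfv : f v ≤ 0 := nonpos_of_mul_nonpos_right (by linarith) ht
  exact le_antisymm hfv (hf v hv)

end IntrinsicInterior

lemma inter_setOf_inner_eq_zero_subset_of_mem_intrinsicInterior {E : Type*}
    [NormedAddCommGroup E] [InnerProductSpace ℝ E] [CompleteSpace E] {K C : Set E} {u v : E}
    (hCK : C ⊆ ProperCone.innerDual K) (hu : u ∈ intrinsicInterior ℝ C) (hv : v ∈ C) :
    K ∩ {x | ⟪u, x⟫ = 0} ⊆ K ∩ {x | ⟪v, x⟫ = 0} := by
  rintro x ⟨hxK, hux : ⟪u, x⟫ = 0⟩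
  refine ⟨hxK, show ⟪v, x⟫ = 0 from ?_⟩
  rw [real_inner_comm] at hux ⊢
  exact (innerₗ E x).eq_zero_of_nonneg_of_mem_intrinsicInterior
    (fun w hw ↦ ProperCone.mem_innerDual.mp (hCK hw) hxK) hu hux hv

theorem stmt16_general {n m : ℕ} (K : Set (EuclideanSpace ℝ (Fin n)))
    (A : EuclideanSpace ℝ (Fin n) →ₗ[ℝ] EuclideanSpace ℝ (Fin m))
    (c d1 d1s : EuclideanSpace ℝ (Fin n))
    (C : Set (EuclideanSpace ℝ (Fin n)))
    (hC : C = {x | x ∈ ProperCone.innerDual K ∧ A x = 0 ∧ (inner ℝ c x : ℝ) = 0})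
    (hd1 : d1 ∈ C) (hd1n : ¬ ∀ y ∈ K, (inner ℝ d1 y : ℝ) = 0)
    (hd1s : d1s ∈ intrinsicInterior ℝ C) :
    (K ∩ {x | (inner ℝ d1s x : ℝ) = 0} ⊆ K ∩ {x | (inner ℝ d1 x : ℝ) = 0}) ∧
      (¬ ∀ y ∈ K, (inner ℝ d1s y : ℝ) = 0) ∧
      (d1 ∈ intrinsicInterior ℝ C →
        K ∩ {x | (inner ℝ d1s x : ℝ) = 0} = K ∩ {x | (inner ℝ d1 x : ℝ) = 0}) := by
  have hCK : C ⊆ ProperCone.innerDual K := hC ▸ fun _ hw ↦ hw.1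
  have hsub := inter_setOf_inner_eq_zero_subset_of_mem_intrinsicInterior hCK hd1s hd1
  refine ⟨hsub, fun hd1s_perp ↦ hd1n fun y hy ↦ (hsub ⟨hy, hd1s_perp y hy⟩).2, fun hd1i ↦ ?_⟩
  exact hsub.antisymm <| inter_setOf_inner_eq_zero_subset_of_mem_intrinsicInterior hCK hd1i
    (intrinsicInterior_subset hd1s)

/-- Replacing a reducing direction `d₁` by a relative interior point `d₁*` of
`K* ∩ ker A ∩ {c}^⊥` yields a smaller (or equal) face; if `d₁` is itself a relative
interior point, the faces coincide. -/
theorem stmt16 {n m : ℕ} (K : Set (EuclideanSpace ℝ (Fin n)))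
    (hK : IsClosedConvexCone K)
    (A : EuclideanSpace ℝ (Fin n) →ₗ[ℝ] EuclideanSpace ℝ (Fin m))
    (c d1 d1s : EuclideanSpace ℝ (Fin n))
    (C : Set (EuclideanSpace ℝ (Fin n)))
    (hC : C = {x | x ∈ ProperCone.innerDual K ∧ A x = 0 ∧ (inner ℝ c x : ℝ) = 0})
    (hd1 : d1 ∈ C) (hd1n : ¬ ∀ y ∈ K, (inner ℝ d1 y : ℝ) = 0)
    (hd1s : d1s ∈ intrinsicInterior ℝ C) :
    (K ∩ {x | (inner ℝ d1s x : ℝ) = 0} ⊆ K ∩ {x | (inner ℝ d1 x : ℝ) = 0}) ∧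
      (¬ ∀ y ∈ K, (inner ℝ d1s y : ℝ) = 0) ∧
      (d1 ∈ intrinsicInterior ℝ C →
        K ∩ {x | (inner ℝ d1s x : ℝ) = 0} = K ∩ {x | (inner ℝ d1 x : ℝ) = 0}) :=
  stmt16_general K A c d1 d1s C hC hd1 hd1n hd1s
end
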